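/- arXiv:2503.01423 — 3 statements merged into one kernel-verified Lean document; each statement's English description precedes it below -/
import Mathlib

section
/- Let ℓ be a balanced zero-neighborhood labeling of GP(n,2). Then for every i ∈ Z_n, ℓ(x_i) = ℓ(x_{i+15}) and ℓ(y_i) = ℓ(y_{i+15}). -/
open Finset

noncomputable def vertexWeight {V Γ : Type*} [Fintype V] [AddCommMonoid Γ]
    (G : SimpleGraph V) (ℓ : V → Γ) (x : V) : Γ := by
  classical exact ∑ y ∈ Finset.univ.filter (fun v => G.Adj x v), ℓ y

/-- `ℓ` is a distance magic labeling of `G` with magic constant `μ`. -/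
def IsDistMagic {V Γ : Type*} [Fintype V] [AddCommMonoid Γ]
    (G : SimpleGraph V) (ℓ : V → Γ) (μ : Γ) : Prop :=
  Function.Bijective ℓ ∧ ∀ x, vertexWeight G ℓ x = μ

noncomputable def degOf {V : Type*} [Fintype V] (G : SimpleGraph V) (v : V) : ℕ := by
  classical exact (Finset.univ.filter (fun u => G.Adj v u)).card

/-- The generalized Petersen graph `GP(n,k)` on vertex set `ZMod n ⊕ ZMod n`:
`Sum.inl i` is the outer vertex `x_i`, `Sum.inr i` the inner vertex `y_i`. -/
def GP (n k : ℕ) : SimpleGraph (ZMod n ⊕ ZMod n) :=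
  SimpleGraph.fromRel (fun a b =>
    match a, b with
    | Sum.inl i, Sum.inl j => j = i + 1
    | Sum.inr i, Sum.inr j => j = i + (k : ZMod n)
    | Sum.inl i, Sum.inr j => i = j
    | _, _ => False)

/-- A balanced zero-neighborhood labeling of a graph `G` on `2n` vertices. -/
noncomputable def IsBZN {V : Type*} [Fintype V] (G : SimpleGraph V) (n : ℕ)
    (ℓ : V → ZMod 2) : Prop := by
  classical exact
    (Finset.univ.filter (fun v => ℓ v = 0)).card = n ∧
    (Finset.univ.filter (fun v => ℓ v = 1)).card = n ∧
    ∀ v, vertexWeight G ℓ v = 0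

/- ### Auxiliary lemmas -/

lemma zhelp5 : ∀ a b c d e : ZMod 2, a + b + c + d + e = 0 → e = a + b + c + d := by decide

lemma zhelp3 : ∀ a b c : ZMod 2, a + (b + c) = 0 → c = a + b := by decide

lemma zhelp2 : ∀ a b : ZMod 2, a + b = 0 → a = b := by decide

lemma period15 {n : ℕ} (c : ZMod n → ZMod 2)
    (h : ∀ t, c t + c (t+2) + c (t+3) + c (t+4) + c (t+6) = 0) (t : ZMod n) :
    c (t+15) = c t := by
  have e : ∀ s, c (s+6) = c s + c (s+2) + c (s+3) + c (s+4) :=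
    fun s => zhelp5 _ _ _ _ _ (h s)
  have e0 := e t
  have e1 := e (t+1)
  have e2 := e (t+2)
  have e3 := e (t+3)
  have e4 := e (t+4)
  have e5 := e (t+5)
  have e6 := e (t+6)
  have e7 := e (t+7)
  have e8 := e (t+8)
  have e9 := e (t+9)
  simp only [add_assoc] at e1 e2 e3 e4 e5 e6 e7 e8 e9
  norm_num at e1 e2 e3 e4 e5 e6 e7 e8 e9
  simp only [e9, e8, e7, e6, e5, e4, e3, e2, e1, e0]
  generalize c t = x0
  generalize c (t+1) = x1
  generalize c (t+2) = x2
  generalize c (t+3) = x3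
  generalize c (t+4) = x4
  generalize c (t+5) = x5
  revert x0 x1 x2 x3 x4 x5
  decide

lemma ne_add {n : ℕ} {c : ZMod n} (hc : c ≠ 0) (i : ZMod n) : i ≠ i + c :=
  fun e => hc (left_eq_add.mp e)

lemma ne_sub {n : ℕ} {c : ZMod n} (hc : c ≠ 0) (i : ZMod n) : i ≠ i - c :=
  fun e => hc (left_eq_add.mp (eq_sub_iff_add_eq.mp e).symm)

lemma eq_add_comm' {n : ℕ} (i j c : ZMod n) : i = j + c ↔ j = i - c := by
  constructor <;> intro h <;> simp [h]

lemma cross {n : ℕ} {c : ZMod n} (hc : c ≠ 0) (i j : ZMod n) :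
    (¬i = j ∧ (j = i + c ∨ i = j + c)) ↔ (j = i + c ∨ j = i - c) := by
  constructor
  · rintro ⟨hne, h | h⟩
    · exact Or.inl h
    · exact Or.inr ((eq_add_comm' _ _ _).mp h)
  · rintro (h | h)
    · subst h; exact ⟨ne_add hc i, Or.inl rfl⟩
    · subst h; exact ⟨ne_sub hc i, Or.inr (by simp)⟩

lemma vw_eq_sum {V : Type*} [Fintype V] [DecidableEq V] (G : SimpleGraph V)
    (ℓ : V → ZMod 2) (x : V) (s : Finset V) (hs : ∀ v, G.Adj x v ↔ v ∈ s) :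
    vertexWeight G ℓ x = ∑ y ∈ s, ℓ y := by
  unfold vertexWeight
  congr 1
  ext v
  simp [hs]

lemma adj_inl {n : ℕ} (h1 : (1 : ZMod n) ≠ 0) (i : ZMod n) (v : ZMod n ⊕ ZMod n) :
    (GP n 2).Adj (Sum.inl i) v ↔
      v ∈ ({Sum.inl (i+1), Sum.inl (i-1), Sum.inr i} : Finset (ZMod n ⊕ ZMod n)) := by
  rcases v with j | j <;> simp [GP, SimpleGraph.fromRel_adj]
  · exact cross h1 i j
  · exact eq_comm

lemma adj_inr {n : ℕ} (h2 : (2 : ZMod n) ≠ 0) (i : ZMod n) (v : ZMod n ⊕ ZMod n) :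
    (GP n 2).Adj (Sum.inr i) v ↔
      v ∈ ({Sum.inr (i+2), Sum.inr (i-2), Sum.inl i} : Finset (ZMod n ⊕ ZMod n)) := by
  rcases v with j | j <;> simp [GP, SimpleGraph.fromRel_adj]
  · exact cross h2 i j

lemma adj_inr2 (i : ZMod 2) (v : ZMod 2 ⊕ ZMod 2) :
    (GP 2 2).Adj (Sum.inr i) v ↔ v ∈ ({Sum.inl i} : Finset (ZMod 2 ⊕ ZMod 2)) := by
  rcases v with j | j <;> simp [GP, SimpleGraph.fromRel_adj]
  · revert i j; decide

lemma z2sub : ∀ j : ZMod 2, j - 1 = j + 1 := by decide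
lemma z4sub : ∀ j : ZMod 4, j - 2 = j + 2 := by decide
lemma z4a : ∀ j : ZMod 4, j + 2 + 2 = j := by decide
lemma z4b : ∀ j : ZMod 4, j + 4 = j := by decide
lemma z4c : ∀ j : ZMod 4, j + 5 = j + 1 := by decide
lemma z4d : ∀ j : ZMod 4, j - 1 = j + 3 := by decide
lemma z4e : ∀ j : ZMod 4, j + 6 = j + 2 := by decide

lemma wx {n : ℕ} [NeZero n] (h2 : (2 : ZMod n) ≠ 0) (ℓ : ZMod n ⊕ ZMod n → ZMod 2) (i : ZMod n) :
    vertexWeight (GP n 2) ℓ (Sum.inl i) =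
      ℓ (Sum.inl (i+1)) + (ℓ (Sum.inl (i-1)) + ℓ (Sum.inr i)) := by
  have h1 : (1 : ZMod n) ≠ 0 := fun e => h2 (by rw [show (2:ZMod n) = 1 + 1 by norm_num, e, add_zero])
  rw [vw_eq_sum _ _ _ _ (adj_inl h1 i)]
  have hd : (i+1 : ZMod n) ≠ i-1 := by
    intro e
    exact ne_add h2 (i-1) (by rw [show (i-1:ZMod n) + 2 = i + 1 from by ring]; exact e.symm)
  rw [Finset.sum_insert (by simp [hd]), Finset.sum_insert (by simp), Finset.sum_singleton]

lemma wy {n : ℕ} [NeZero n] (h4 : (4 : ZMod n) ≠ 0) (ℓ : ZMod n ⊕ ZMod n → ZMod 2) (i : ZMod n) :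
    vertexWeight (GP n 2) ℓ (Sum.inr i) =
      ℓ (Sum.inr (i+2)) + (ℓ (Sum.inr (i-2)) + ℓ (Sum.inl i)) := by
  have h2 : (2 : ZMod n) ≠ 0 := fun e => h4 (by rw [show (4:ZMod n) = 2 + 2 by norm_num, e, add_zero])
  rw [vw_eq_sum _ _ _ _ (adj_inr h2 i)]
  have hd : (i+2 : ZMod n) ≠ i-2 := by
    intro e
    exact ne_add h4 (i-2) (by rw [show (i-2:ZMod n) + 4 = i + 2 from by ring]; exact e.symm)
  rw [Finset.sum_insert (by simp [hd]), Finset.sum_insert (by simp), Finset.sum_singleton]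

theorem stmt9 (n : ℕ) [NeZero n] (ℓ : ZMod n ⊕ ZMod n → ZMod 2)
    (hbzn : IsBZN (GP n 2) n ℓ) (i : ZMod n) :
    ℓ (Sum.inl i) = ℓ (Sum.inl (i + 15)) ∧
    ℓ (Sum.inr i) = ℓ (Sum.inr (i + 15)) := by
  obtain ⟨hc0, hc1, hw⟩ := hbzn
  by_cases h4 : (4 : ZMod n) = 0
  · -- degenerate cases : n ∣ 4
    have hdvd : n ∣ 4 := by
      have : ((4 : ℕ) : ZMod n) = 0 := by rwa [Nat.cast_ofNat]
      exact (ZMod.natCast_eq_zero_iff 4 n).mp this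
    have hle : n ≤ 4 := Nat.le_of_dvd (by norm_num) hdvd
    have hpos : 0 < n := Nat.pos_of_ne_zero (NeZero.ne n)
    interval_cases n
    · -- n = 1
      have : i + 15 = i := Subsingleton.elim _ _
      rw [this]
      exact ⟨rfl, rfl⟩
    · -- n = 2
      exfalso
      have ha : ∀ j : ZMod 2, ℓ (Sum.inl j) = 0 := by
        intro j
        have h := hw (Sum.inr j)
        rwa [vw_eq_sum _ _ _ _ (adj_inr2 j), Finset.sum_singleton] at h
      have hb : ∀ j : ZMod 2, ℓ (Sum.inr j) = 0 := by
        intro j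
        have h := hw (Sum.inl j)
        rw [vw_eq_sum _ _ _ _ (fun v => by
          rw [adj_inl (by decide) j v]
          simp only [Finset.mem_insert, Finset.mem_singleton, z2sub]
          tauto :
            ∀ v, (GP 2 2).Adj (Sum.inl j) v ↔
              v ∈ ({Sum.inl (j+1), Sum.inr j} : Finset (ZMod 2 ⊕ ZMod 2))),
          Finset.sum_pair (by simp)] at h
        rw [ha (j+1)] at h
        simpa using h
      have : (Finset.univ.filter (fun v => ℓ v = 1)).card = 0 := by
        rw [Finset.card_eq_zero, Finset.filter_eq_empty_iff]
        rintro (j | j) _ <;> simp [ha, hb]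
      omega
    · -- n = 3 does not divide 4
      omega
    · -- n = 4
      exfalso
      have h2' : (2 : ZMod 4) ≠ 0 := by decide
      have hE : ∀ j : ZMod 4, ℓ (Sum.inr (j+2)) = ℓ (Sum.inl j) := by
        intro j
        have h := hw (Sum.inr j)
        rw [vw_eq_sum _ _ _ _ (fun v => by
          rw [adj_inr h2' j v]
          simp only [Finset.mem_insert, Finset.mem_singleton, z4sub]
          tauto :
            ∀ v, (GP 4 2).Adj (Sum.inr j) v ↔
              v ∈ ({Sum.inr (j+2), Sum.inl j} : Finset (ZMod 4 ⊕ ZMod 4))),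
          Finset.sum_pair (by simp)] at h
        exact zhelp2 _ _ h
      have hsub : ∀ j : ZMod 4, ℓ (Sum.inr j) = ℓ (Sum.inl (j+2)) := by
        intro j
        have h := hE (j+2)
        rwa [z4a j] at h
      have hR : ∀ j : ZMod 4,
          ℓ (Sum.inl (j+1)) + (ℓ (Sum.inl (j+3)) + ℓ (Sum.inl (j+2))) = 0 := by
        intro j
        have h := hw (Sum.inl j)
        rw [wx h2' ℓ j, hsub j, z4d j] at h
        exact h
      have hA : ∀ j : ZMod 4, ℓ (Sum.inl j) = 0 := by
        intro j
        have r0 := hR j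
        have r1 := hR (j+1)
        have r2 := hR (j+2)
        have r3 := hR (j+3)
        simp only [add_assoc] at r1 r2 r3
        norm_num at r1 r2 r3
        simp only [z4b, z4c, z4e] at r1 r2 r3
        revert r0 r1 r2 r3
        generalize ℓ (Sum.inl j) = x0
        generalize ℓ (Sum.inl (j+1)) = x1
        generalize ℓ (Sum.inl (j+2)) = x2
        generalize ℓ (Sum.inl (j+3)) = x3
        revert x0 x1 x2 x3
        decide
      have hB : ∀ j : ZMod 4, ℓ (Sum.inr j) = 0 := fun j => by rw [hsub j, hA]
      have : (Finset.univ.filter (fun v => ℓ v = 1)).card = 0 := by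
        rw [Finset.card_eq_zero, Finset.filter_eq_empty_iff]
        rintro (j | j) _ <;> simp [hA, hB]
      omega
  · -- main case
    have h2 : (2 : ZMod n) ≠ 0 :=
      fun e => h4 (by rw [show (4:ZMod n) = 2 + 2 by norm_num, e, add_zero])
    have hEx : ∀ j : ZMod n,
        ℓ (Sum.inl (j+1)) + (ℓ (Sum.inl (j-1)) + ℓ (Sum.inr j)) = 0 := by
      intro j; have h := hw (Sum.inl j); rwa [wx h2 ℓ j] at h
    have hEy : ∀ j : ZMod n,
        ℓ (Sum.inr (j+2)) + (ℓ (Sum.inr (j-2)) + ℓ (Sum.inl j)) = 0 := by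
      intro j; have h := hw (Sum.inr j); rwa [wy h4 ℓ j] at h
    have hb : ∀ j : ZMod n, ℓ (Sum.inr j) = ℓ (Sum.inl (j+1)) + ℓ (Sum.inl (j-1)) :=
      fun j => zhelp3 _ _ _ (hEx j)
    have ha : ∀ j : ZMod n, ℓ (Sum.inl j) = ℓ (Sum.inr (j+2)) + ℓ (Sum.inr (j-2)) :=
      fun j => zhelp3 _ _ _ (hEy j)
    have hRa : ∀ t : ZMod n, (fun s => ℓ (Sum.inl s)) t + (fun s => ℓ (Sum.inl s)) (t+2)
        + (fun s => ℓ (Sum.inl s)) (t+3) + (fun s => ℓ (Sum.inl s)) (t+4)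
        + (fun s => ℓ (Sum.inl s)) (t+6) = 0 := by
      intro t
      simp only
      have h := hEy (t+3)
      have u1 := hb (t+3+2)
      have u2 := hb (t+3-2)
      simp only [add_assoc, add_sub_assoc] at h u1 u2
      norm_num at h u1 u2
      rw [u1, u2] at h
      simp only [add_assoc, add_sub_assoc] at h
      linear_combination h
    have hRb : ∀ t : ZMod n, (fun s => ℓ (Sum.inr s)) t + (fun s => ℓ (Sum.inr s)) (t+2)
        + (fun s => ℓ (Sum.inr s)) (t+3) + (fun s => ℓ (Sum.inr s)) (t+4)
        + (fun s => ℓ (Sum.inr s)) (t+6) = 0 := by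
      intro t
      simp only
      have h := hEx (t+3)
      have u1 := ha (t+3+1)
      have u2 := ha (t+3-1)
      simp only [add_assoc, add_sub_assoc] at h u1 u2
      norm_num at h u1 u2
      rw [u1, u2] at h
      simp only [add_assoc, add_sub_assoc] at h
      linear_combination h
    exact ⟨(period15 _ hRa i).symm, (period15 _ hRb i).symm⟩
end

section
/- For every n ≥ 3 and every Abelian group Γ of order n, the generalized Petersen graph GP(n,2) has no (Z₂ ⊕ Γ)-distance magic labeling. -/
open Finset

lemma vertexWeight_eq' {V Γ : Type*} [Fintype V] [AddCommMonoid Γ] (G : SimpleGraph V)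
    (ℓ : V → Γ) (x : V) [DecidablePred (G.Adj x)] :
    vertexWeight G ℓ x = ∑ y ∈ Finset.univ.filter (fun v => G.Adj x v), ℓ y := by
  unfold vertexWeight
  congr 1
  exact Finset.filter_congr_decidable _ _ _

open Classical in
lemma filter_inl' (n : ℕ) [NeZero n] (h2 : (2 : ZMod n) ≠ 0) (i : ZMod n) :
    Finset.univ.filter (fun v => (GP n 2).Adj (Sum.inl i) v)
      = {Sum.inl (i+1), Sum.inl (i-1), Sum.inr i} := by
  have h1 : (1 : ZMod n) ≠ 0 := by
    intro h; apply h2; rw [show (2:ZMod n) = 1 + 1 by ring, h]; ring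
  ext v
  cases v with
  | inl j =>
      simp only [GP, SimpleGraph.fromRel_adj, mem_filter, mem_univ, true_and, mem_insert,
        mem_singleton, Sum.inl.injEq, ne_eq, reduceCtorEq, or_false]
      constructor
      · rintro ⟨hne, h | h⟩
        · exact Or.inl h
        · right; rw [h]; ring
      · rintro (h | h)
        · exact ⟨by rw [h]; intro hh; exact h1 (by linear_combination -hh), Or.inl h⟩
        · refine ⟨?_, Or.inr ?_⟩
          · rw [h]; intro hh; exact h1 (by linear_combination hh)
          · rw [h]; ring
  | inr j =>
      simp only [GP, SimpleGraph.fromRel_adj, mem_filter, mem_univ, true_and, mem_insert,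
        mem_singleton, Sum.inr.injEq, ne_eq, reduceCtorEq, not_false_iff, true_and, false_or,
        or_false]
      tauto

open Classical in
lemma filter_inr' (n : ℕ) [NeZero n] (h2 : (2 : ZMod n) ≠ 0) (i : ZMod n) :
    Finset.univ.filter (fun v => (GP n 2).Adj (Sum.inr i) v)
      = {Sum.inr (i+2), Sum.inr (i-2), Sum.inl i} := by
  ext v
  cases v with
  | inl j =>
      simp only [GP, SimpleGraph.fromRel_adj, mem_filter, mem_univ, true_and, mem_insert,
        mem_singleton, Sum.inl.injEq, ne_eq, reduceCtorEq, not_false_iff, true_and, false_or,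
        or_false]
  | inr j =>
      simp only [GP, SimpleGraph.fromRel_adj, mem_filter, mem_univ, true_and, mem_insert,
        mem_singleton, Sum.inr.injEq, ne_eq, reduceCtorEq, or_false, false_or]
      constructor
      · rintro ⟨hne, h | h⟩
        · left; rw [h]; norm_num
        · right; rw [h]; push_cast; ring
      · rintro (h | h)
        · refine ⟨by rw [h]; intro hh; exact h2 (by linear_combination -hh),
            Or.inl (by rw [h]; norm_num)⟩
        · refine ⟨by rw [h]; intro hh; exact h2 (by linear_combination hh),
            Or.inr (by rw [h]; push_cast; ring)⟩

-- outer weight equation, any n ≥ 3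
lemma weight_inl {Γ : Type*} [AddCommGroup Γ] (n : ℕ) [NeZero n] (h2 : (2 : ZMod n) ≠ 0)
    (ℓ : ZMod n ⊕ ZMod n → Γ) (i : ZMod n) :
    vertexWeight (GP n 2) ℓ (Sum.inl i)
      = ℓ (Sum.inl (i+1)) + ℓ (Sum.inl (i-1)) + ℓ (Sum.inr i) := by
  classical
  rw [vertexWeight_eq', filter_inl' n h2 i]
  have hne : (i + 1 : ZMod n) ≠ i - 1 := fun h => h2 (by linear_combination h)
  rw [Finset.sum_insert (by simp [hne]), Finset.sum_insert (by simp), Finset.sum_singleton,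
    add_assoc]

-- inner weight equation, n ≥ 3, n ≠ 4
lemma weight_inr {Γ : Type*} [AddCommGroup Γ] (n : ℕ) [NeZero n] (h2 : (2 : ZMod n) ≠ 0)
    (h4 : (4 : ZMod n) ≠ 0) (ℓ : ZMod n ⊕ ZMod n → Γ) (i : ZMod n) :
    vertexWeight (GP n 2) ℓ (Sum.inr i)
      = ℓ (Sum.inr (i+2)) + ℓ (Sum.inr (i-2)) + ℓ (Sum.inl i) := by
  classical
  rw [vertexWeight_eq', filter_inr' n h2 i]
  have hne : (i + 2 : ZMod n) ≠ i - 2 := fun h => h4 (by linear_combination h)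
  rw [Finset.sum_insert (by simp [hne]), Finset.sum_insert (by simp), Finset.sum_singleton,
    add_assoc]

-- inner weight equation for n = 4
lemma weight_inr4 {Γ : Type*} [AddCommGroup Γ] (ℓ : ZMod 4 ⊕ ZMod 4 → Γ) (i : ZMod 4) :
    vertexWeight (GP 4 2) ℓ (Sum.inr i) = ℓ (Sum.inr (i+2)) + ℓ (Sum.inl i) := by
  classical
  have h24 : (i - 2 : ZMod 4) = i + 2 := by
    have h : (4:ZMod 4) = 0 := by decide
    linear_combination -h
  rw [vertexWeight_eq', filter_inr' 4 (by decide) i, h24,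
    Finset.insert_idem, Finset.sum_insert (by simp), Finset.sum_singleton]

def wt : ZMod 2 → ℕ := fun x => if x = 1 then 1 else 0

lemma wtcast : ∀ x : ZMod 2, ((wt x : ℕ) : ZMod 2) = x := by decide

lemma n4_case {G : Type*} [AddCommGroup G] (ℓ : ZMod 4 ⊕ ZMod 4 → G) (μ : G)
    (hinj : Function.Injective ℓ) (hmag : ∀ x, vertexWeight (GP 4 2) ℓ x = μ) : False := by
  have E1 : ∀ i : ZMod 4, ℓ (Sum.inl (i+1)) + ℓ (Sum.inl (i-1)) + ℓ (Sum.inr i) = μ :=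
    fun i => by rw [← weight_inl 4 (by decide) ℓ i]; exact hmag _
  have E2 : ∀ i : ZMod 4, ℓ (Sum.inr (i+2)) + ℓ (Sum.inl i) = μ := fun i => by
    rw [← weight_inr4 ℓ i]; exact hmag _
  have E2' : ∀ i : ZMod 4, ℓ (Sum.inr i) = μ - ℓ (Sum.inl (i+2)) := by
    intro i
    have h := E2 (i+2)
    rw [show (i+2+2 : ZMod 4) = i by
      have h4 : (4:ZMod 4) = 0 := by decide
      linear_combination h4] at h
    exact eq_sub_of_add_eq h
  have k0 := E1 0
  have k2 := E1 2
  rw [E2' 0] at k0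
  rw [E2' 2] at k2
  rw [show (0+1 : ZMod 4) = 1 by decide, show (0-1 : ZMod 4) = 3 by decide,
    show (0+2 : ZMod 4) = 2 by decide] at k0
  rw [show (2+1 : ZMod 4) = 3 by decide, show (2-1 : ZMod 4) = 1 by decide,
    show (2+2 : ZMod 4) = 0 by decide] at k2
  have h0 : ℓ (Sum.inl 1) + ℓ (Sum.inl 3) = ℓ (Sum.inl 2) :=
    add_right_cancel (b := μ - ℓ (Sum.inl 2)) (by rw [k0]; abel)
  have h2 : ℓ (Sum.inl 3) + ℓ (Sum.inl 1) = ℓ (Sum.inl 0) :=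
    add_right_cancel (b := μ - ℓ (Sum.inl 0)) (by rw [k2]; abel)
  have hkey : ℓ (Sum.inl 0) = ℓ (Sum.inl 2) := by
    rw [← h0, ← h2, add_comm]
  have := hinj hkey
  simp only [Sum.inl.injEq] at this
  exact absurd this (by decide)

lemma htwo' : (2 : ZMod 2) = 0 := by decide

lemma gen_case {Γ : Type*} [AddCommGroup Γ] [Fintype Γ] (n : ℕ) [NeZero n] (hn : 3 ≤ n)
    (hn4 : n ≠ 4) (hcard : Fintype.card Γ = n) (ℓ : ZMod n ⊕ ZMod n → ZMod 2 × Γ)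
    (μ : ZMod 2 × Γ) (hbij : Function.Bijective ℓ)
    (hmag : ∀ x, vertexWeight (GP n 2) ℓ x = μ) : False := by
  classical
  have hn0 : n ≠ 0 := NeZero.ne n
  have h2 : (2 : ZMod n) ≠ 0 := by
    have : ¬ (n ∣ 2) := fun h => by
      have := Nat.le_of_dvd (by norm_num) h
      omega
    have h' : ((2:ℕ) : ZMod n) ≠ 0 := fun hh => this ((ZMod.natCast_eq_zero_iff 2 n).mp hh)
    simpa using h'
  have h4 : (4 : ZMod n) ≠ 0 := by
    have : ¬ (n ∣ 4) := by
      intro h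
      have hle := Nat.le_of_dvd (by norm_num) h
      interval_cases n
      · norm_num at h
      · exact hn4 rfl
    have h' : ((4:ℕ) : ZMod n) ≠ 0 := fun hh => this ((ZMod.natCast_eq_zero_iff 4 n).mp hh)
    simpa using h'
  set a : ZMod n → ZMod 2 := fun i => (ℓ (Sum.inl i)).1 with ha
  set b : ZMod n → ZMod 2 := fun i => (ℓ (Sum.inr i)).1 with hbdef
  set c : ZMod 2 := μ.1 with hc
  have E1 : ∀ i, a (i+1) + a (i-1) + b i = c := by
    intro i
    have h := congrArg Prod.fst ((weight_inl n h2 ℓ i).symm.trans (hmag (Sum.inl i)))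
    simpa [ha, hbdef, hc] using h
  have E2 : ∀ i, b (i+2) + b (i-2) + a i = c := by
    intro i
    have h := congrArg Prod.fst ((weight_inr n h2 h4 ℓ i).symm.trans (hmag (Sum.inr i)))
    simpa [ha, hbdef, hc] using h
  have hb : ∀ i, b i = c + a (i+1) + a (i-1) := by
    intro i
    linear_combination (E1 i) - (a (i+1) + a (i-1)) * htwo'
  have hC : ∀ i, a (i-3) + a (i-1) + a i + a (i+1) + a (i+3) = c := by
    intro i
    have e2 := E2 i
    rw [hb (i+2), hb (i-2), show (i+2+1 : ZMod n) = i+3 by ring,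
      show (i+2-1 : ZMod n) = i+1 by ring, show (i-2+1 : ZMod n) = i-1 by ring,
      show (i-2-1 : ZMod n) = i-3 by ring] at e2
    linear_combination e2 - c * htwo'
  -- 15-periodicity
  have hper : ∀ i, a (i + 15) = a i := by
    intro i
    set s : ℕ → ZMod 2 := fun k => a (i + (k : ℕ)) with hs
    have row : ∀ k : ℕ, s k + s (k+2) + s (k+3) + s (k+4) + s (k+6) = c := by
      intro k
      have h := hC (i + (k:ℕ) + 3)
      rw [show (i + (k:ℕ) + 3 - 3 : ZMod n) = i + (k:ℕ) by ring,
        show (i + (k:ℕ) + 3 - 1 : ZMod n) = i + ((k+2 : ℕ):ZMod n) by push_cast; ring,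
        show (i + (k:ℕ) + 3 + 1 : ZMod n) = i + ((k+4 : ℕ):ZMod n) by push_cast; ring,
        show (i + (k:ℕ) + 3 + 3 : ZMod n) = i + ((k+6 : ℕ):ZMod n) by push_cast; ring,
        show (i + (k:ℕ) + 3 : ZMod n) = i + ((k+3 : ℕ):ZMod n) by push_cast; ring] at h
      exact h
    have r0 := row 0
    have r2 := row 2
    have r3 := row 3
    have r6 := row 6
    have r7 := row 7
    have r9 := row 9
    norm_num at r0 r2 r3 r6 r7 r9
    have g15 : a (i + 15) = s 15 := by rw [hs]; norm_num
    have g0 : a i = s 0 := by rw [hs]; norm_num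
    rw [g15, g0]
    linear_combination r0 + r2 + r3 + r6 + r7 + r9 +
      (3*c - s 0 - (s 2 + s 3 + s 4 + s 5 + s 7 + s 8 + s 10 + s 11 + s 12 + s 13)
        - 2*(s 6 + s 9)) * htwo'
  -- periodicity by multiples of 15
  have hperN : ∀ (k : ℕ) (i : ZMod n), a (i + ((15*k : ℕ) : ZMod n)) = a i := by
    intro k
    induction k with
    | zero => intro i; norm_num
    | succ k ih =>
        intro i
        have hc15 : ((15*(k+1) : ℕ) : ZMod n) = ((15*k : ℕ) : ZMod n) + 15 := by push_cast; ring
        rw [hc15, ← add_assoc, hper, ih]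
  set d : ℕ := Nat.gcd 15 n with hd
  have hd0 : 0 < d := Nat.gcd_pos_of_pos_left n (by norm_num)
  haveI : NeZero d := ⟨hd0.ne'⟩
  have hdvd15 : d ∣ 15 := Nat.gcd_dvd_left 15 n
  have hdvdn : d ∣ n := Nat.gcd_dvd_right 15 n
  have hdodd : ¬ 2 ∣ d := fun h => by
    have := h.trans hdvd15; norm_num at this
  have hcastd : ((d : ℕ) : ZMod 2) = 1 := by
    have h1 : d % 2 = 1 := by omega
    rw [← ZMod.natCast_mod, h1]; rfl
  have hstep : ∀ i : ZMod n, a (i + (d : ZMod n)) = a i := by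
    have hbez := Nat.gcd_eq_gcd_ab 15 n
    set x : ℤ := Nat.gcdA 15 n with hx
    set y : ℤ := Nat.gcdB 15 n with hy
    have hxmod : (0:ℤ) ≤ x % n := Int.emod_nonneg x (by exact_mod_cast hn0)
    set k : ℕ := (x % n).toNat with hk
    have h1 : ((k:ℕ) : ZMod n) = ((x : ℤ) : ZMod n) := by
      have hmm : ((x % (n:ℤ) : ℤ) : ZMod n) = ((x:ℤ) : ZMod n) :=
        (ZMod.intCast_eq_intCast_iff _ _ _).mpr (Int.mod_modEq x n)
      rw [← hmm, ← Int.cast_natCast, hk, Int.toNat_of_nonneg hxmod]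
    have h15x : ((15 * x : ℤ) : ZMod n) = ((d:ℤ) : ZMod n) := by
      have hxx : (15 * x : ℤ) = (d:ℤ) - (n:ℤ) * y := by
        rw [hbez]; ring
      rw [hxx]
      push_cast
      rw [ZMod.natCast_self]
      ring
    have hcast : ((15 * k : ℕ) : ZMod n) = (d : ZMod n) := by
      calc ((15*k : ℕ) : ZMod n) = 15 * ((k:ℕ) : ZMod n) := by push_cast; ring
        _ = 15 * ((x:ℤ) : ZMod n) := by rw [h1]
        _ = ((15 * x : ℤ) : ZMod n) := by push_cast; ring
        _ = ((d:ℤ) : ZMod n) := h15x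
        _ = (d : ZMod n) := by push_cast; ring
    intro i
    rw [← hcast]
    exact hperN k i
  have hstepm : ∀ (m : ℕ) (i : ZMod n), a (i + ((d * m : ℕ) : ZMod n)) = a i := by
    intro m
    induction m with
    | zero => intro i; norm_num
    | succ m ih =>
        intro i
        have hcm : ((d*(m+1) : ℕ) : ZMod n) = ((d*m : ℕ) : ZMod n) + (d : ZMod n) := by
          push_cast; ring
        rw [hcm, ← add_assoc, hstep, ih]
  set π : ZMod n →+* ZMod d := ZMod.castHom hdvdn (ZMod d) with hπ
  have hπval : ∀ i : ZMod n, π i = ((i.val : ℕ) : ZMod d) := fun i => by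
    rw [hπ, ZMod.castHom_apply, ← ZMod.natCast_val]
  have hfacA : ∀ i : ZMod n, a i = a ((((π i).val : ℕ) : ZMod n)) := by
    intro i
    have hv1 : (π i).val = i.val % d := by rw [hπval, ZMod.val_natCast]
    have h3 : i = ((i.val % d : ℕ) : ZMod n) + ((d * (i.val / d) : ℕ) : ZMod n) := by
      conv_lhs => rw [← ZMod.natCast_rightInverse i]
      rw [← Nat.cast_add, Nat.mod_add_div]
    rw [hv1]
    conv_lhs => rw [h3]
    exact hstepm (i.val / d) _
  set A : ZMod d → ZMod 2 := fun t => a (((t.val : ℕ) : ZMod n)) with hA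
  have hfacA' : ∀ i, a i = A (π i) := hfacA
  have hπsurj : ∀ t : ZMod d, π (((t.val : ℕ) : ZMod n)) = t := by
    intro t
    rw [hπval, ZMod.val_natCast,
      Nat.mod_eq_of_lt (lt_of_lt_of_le (ZMod.val_lt t)
        (Nat.le_of_dvd (Nat.pos_of_ne_zero hn0) hdvdn))]
    exact ZMod.natCast_rightInverse t
  have RA : ∀ t : ZMod d, A (t-3) + A (t-1) + A t + A (t+1) + A (t+3) = c := by
    intro t
    have h := hC (((t.val : ℕ) : ZMod n))
    rw [hfacA' ((((t.val : ℕ) : ZMod n))-3), hfacA' ((((t.val : ℕ) : ZMod n))-1),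
      hfacA' (((t.val : ℕ) : ZMod n)), hfacA' ((((t.val : ℕ) : ZMod n))+1),
      hfacA' ((((t.val : ℕ) : ZMod n))+3)] at h
    rw [map_sub, map_sub, map_add, map_add, map_one, map_ofNat, hπsurj t] at h
    exact h
  have hSA : ∑ t : ZMod d, A t = c := by
    have h := Finset.sum_congr rfl (fun t (_ : t ∈ Finset.univ) => RA t)
    rw [Finset.sum_add_distrib, Finset.sum_add_distrib, Finset.sum_add_distrib,
      Finset.sum_add_distrib] at h
    rw [show ∑ t : ZMod d, A (t - 3) = ∑ t : ZMod d, A t from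
        Fintype.sum_equiv (Equiv.subRight (3 : ZMod d)) _ _ (fun t => rfl),
      show ∑ t : ZMod d, A (t - 1) = ∑ t : ZMod d, A t from
        Fintype.sum_equiv (Equiv.subRight (1 : ZMod d)) _ _ (fun t => rfl),
      show ∑ t : ZMod d, A (t + 1) = ∑ t : ZMod d, A t from
        Fintype.sum_equiv (Equiv.addRight (1 : ZMod d)) _ _ (fun t => rfl),
      show ∑ t : ZMod d, A (t + 3) = ∑ t : ZMod d, A t from
        Fintype.sum_equiv (Equiv.addRight (3 : ZMod d)) _ _ (fun t => rfl),
      Finset.sum_const, Finset.card_univ, ZMod.card, nsmul_eq_mul, hcastd, one_mul] at h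
    linear_combination h - 2 * (∑ t : ZMod d, A t) * htwo'
  set B : ZMod d → ZMod 2 := fun t => c + A (t - 1) + A (t + 1) with hB
  have hfacB : ∀ i, b i = B (π i) := by
    intro i
    rw [hb i]
    show c + a (i+1) + a (i-1) = c + A (π i - 1) + A (π i + 1)
    rw [hfacA' (i+1), hfacA' (i-1), map_add, map_sub, map_one]
    ring
  have hSB : ∑ t : ZMod d, B t = c := by
    show (∑ t : ZMod d, (c + A (t - 1) + A (t + 1))) = c
    rw [Finset.sum_add_distrib, Finset.sum_add_distrib,
      show ∑ t : ZMod d, A (t - 1) = ∑ t : ZMod d, A t from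
        Fintype.sum_equiv (Equiv.subRight (1 : ZMod d)) _ _ (fun t => rfl),
      show ∑ t : ZMod d, A (t + 1) = ∑ t : ZMod d, A t from
        Fintype.sum_equiv (Equiv.addRight (1 : ZMod d)) _ _ (fun t => rfl),
      Finset.sum_const, Finset.card_univ, ZMod.card, nsmul_eq_mul, hcastd, one_mul, hSA]
    linear_combination c * htwo'
  -- counting
  set K : ℕ := (Finset.univ.filter (fun i : ZMod n => π i = 0)).card with hK
  have hKt : ∀ t : ZMod d, (Finset.univ.filter (fun i : ZMod n => π i = t)).card = K := by
    intro t
    rw [hK]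
    apply Finset.card_bij (fun i _ => i - ((t.val : ℕ) : ZMod n))
    · intro i hi
      simp only [Finset.mem_filter, Finset.mem_univ, true_and] at hi ⊢
      rw [map_sub, hi, hπsurj t, sub_self]
    · intro i _ j _ hij
      exact sub_left_injective hij
    · intro j hj
      refine ⟨j + ((t.val : ℕ) : ZMod n), ?_, by ring⟩
      simp only [Finset.mem_filter, Finset.mem_univ, true_and] at hj ⊢
      rw [map_add, hj, hπsurj t, zero_add]
  have hcardn : n = d * K := by
    have h := Finset.card_eq_sum_card_fiberwise
      (f := fun i : ZMod n => π i) (s := (Finset.univ : Finset (ZMod n)))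
      (t := Finset.univ) (fun i _ => Finset.mem_univ _)
    rw [Finset.card_univ, ZMod.card] at h
    rw [h, Finset.sum_congr rfl (fun t _ => hKt t), Finset.sum_const, Finset.card_univ,
      ZMod.card, smul_eq_mul]
  have hsum_a : ∑ i : ZMod n, wt (a i) = K * (∑ t : ZMod d, wt (A t)) := by
    rw [← Finset.sum_fiberwise Finset.univ (fun i : ZMod n => π i) (fun i => wt (a i)),
      Finset.mul_sum]
    apply Finset.sum_congr rfl
    intro t _
    have hcg : ∀ i ∈ Finset.univ.filter (fun i : ZMod n => π i = t), wt (a i) = wt (A t) := by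
      intro i hi
      simp only [Finset.mem_filter] at hi
      rw [hfacA' i, hi.2]
    rw [Finset.sum_congr rfl hcg, Finset.sum_const, hKt t, smul_eq_mul]
  have hsum_b : ∑ i : ZMod n, wt (b i) = K * (∑ t : ZMod d, wt (B t)) := by
    rw [← Finset.sum_fiberwise Finset.univ (fun i : ZMod n => π i) (fun i => wt (b i)),
      Finset.mul_sum]
    apply Finset.sum_congr rfl
    intro t _
    have hcg : ∀ i ∈ Finset.univ.filter (fun i : ZMod n => π i = t), wt (b i) = wt (B t) := by
      intro i hi
      simp only [Finset.mem_filter] at hi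
      rw [hfacB i, hi.2]
    rw [Finset.sum_congr rfl hcg, Finset.sum_const, hKt t, smul_eq_mul]
  have hbal : (∑ i : ZMod n, wt (a i)) + (∑ i : ZMod n, wt (b i)) = n := by
    have h := Fintype.sum_bijective ℓ hbij (fun v => wt ((ℓ v).1)) (fun g => wt g.1)
      (fun v => rfl)
    rw [Fintype.sum_sum_type] at h
    have hRHS : ∑ g : ZMod 2 × Γ, wt g.1 = n := by
      rw [Fintype.sum_prod_type]
      simp only [Finset.sum_const, Finset.card_univ, hcard, smul_eq_mul]
      rw [show (∑ e : ZMod 2, n * wt e) = n * ∑ e : ZMod 2, wt e from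
        (Finset.mul_sum _ _ _).symm]
      rw [show (∑ e : ZMod 2, wt e) = 1 from by decide, mul_one]
    rw [hRHS] at h
    exact h
  have hfin : (∑ t : ZMod d, wt (A t)) + (∑ t : ZMod d, wt (B t)) = d := by
    have h1 : K * ((∑ t : ZMod d, wt (A t)) + (∑ t : ZMod d, wt (B t))) = K * d := by
      rw [Nat.mul_add, ← hsum_a, ← hsum_b, hbal, hcardn]; ring
    have hK0 : 0 < K := by
      rcases Nat.eq_zero_or_pos K with h0 | h0
      · rw [h0, Nat.mul_zero] at hcardn; exact absurd hcardn hn0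
      · exact h0
    exact Nat.eq_of_mul_eq_mul_left hK0 h1
  -- final parity contradiction
  have hcastfin := congrArg (fun m : ℕ => ((m : ℕ) : ZMod 2)) hfin
  simp only [Nat.cast_add, Nat.cast_sum] at hcastfin
  rw [Finset.sum_congr rfl (fun t (_ : t ∈ Finset.univ) => wtcast (A t)),
    Finset.sum_congr rfl (fun t (_ : t ∈ Finset.univ) => wtcast (B t)),
    hSA, hSB, hcastd] at hcastfin
  have : (0 : ZMod 2) = 1 := by linear_combination hcastfin - c * htwo'
  exact absurd this (by decide)

theorem stmt14 {Γ : Type*} [AddCommGroup Γ] [Fintype Γ]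
    (n : ℕ) [NeZero n] (hn : 3 ≤ n) (hcard : Fintype.card Γ = n) :
    ¬ ∃ (ℓ : ZMod n ⊕ ZMod n → ZMod 2 × Γ) (μ : ZMod 2 × Γ),
      IsDistMagic (GP n 2) ℓ μ := by
  rintro ⟨ℓ, μ, hbij, hmag⟩
  by_cases h4 : n = 4
  · subst h4
    exact n4_case ℓ μ hbij.1 hmag
  · exact gen_case n hn h4 hcard ℓ μ hbij hmag
end

section
/- For every n ≥ 3, the generalized Petersen graph GP(n,2) has no Γ-distance magic labeling for any Abelian group Γ of order 2n. -/
open Finset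

/-!
Composing a distance magic labeling with a surjection `Γ →+ ZMod 2` (which exists since `|Γ|` is
even) gives a `ZMod 2`-labeling of `GP(n,2)` with exactly `n` ones and constant neighbourhood sums.
For `n ≠ 4` these equations force the outer and inner labels to be periodic with period
`d = gcd(15, n)`, so the labeling descends to `ZMod d`. Summing all the equations there shows that
the number of ones per period is even, while `n` ones in total means `d` ones per period, and `d` is
odd. For `n = 4` the inner vertices have degree 2, and the equations give `x₁` and `x₃` the same
label `ℓ x₀ + ℓ x₂`.
-/

open Function

lemma AddCommGroup.exists_addMonoidHom_zmod_surjective {Γ : Type*} [AddCommGroup Γ] [Finite Γ]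
    {p : ℕ} (hp : p.Prime) (hdvd : p ∣ Nat.card Γ) :
    ∃ φ : Γ →+ ZMod p, Surjective φ := by
  classical
  obtain ⟨ι, _, q, -, e, ⟨F⟩⟩ := AddCommGroup.equiv_directSum_zmod_of_finite Γ
  have hcard : Nat.card Γ = ∏ i, q i ^ e i := by
    rw [Nat.card_congr (F.toEquiv.trans DFinsupp.equivFunOnFintype), Nat.card_pi]
    simp
  obtain ⟨i, -, hi⟩ := (Prime.dvd_finsetProd_iff hp.prime _).1 (hcard ▸ hdvd)
  have heval : Surjective (DFinsupp.evalAddMonoidHom (β := fun i => ZMod (q i ^ e i)) i) :=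
    fun y => ⟨DFinsupp.single i y, DFinsupp.single_eq_same (β := fun i => ZMod (q i ^ e i))⟩
  exact ⟨(ZMod.castHom hi (ZMod p)).toAddMonoidHom.comp
    ((DFinsupp.evalAddMonoidHom i).comp F.toAddMonoidHom),
    (ZMod.ringHom_surjective (ZMod.castHom hi (ZMod p))).comp (heval.comp F.surjective)⟩

lemma AddMonoidHom.card_filter_of_surjective {G H : Type*} [AddGroup G] [AddGroup H]
    [Fintype G] [Fintype H] [DecidableEq H] {f : G →+ H} (hf : Surjective f) (p : H → Prop)
    [DecidablePred p] : #{x | p (f x)} = Nat.card f.ker * #{y | p y} := by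
  calc #{x | p (f x)} = #{x | f x ∈ univ.filter p} := by simp
    _ = ∑ y ∈ univ.filter p, #{x | f x = y} := (sum_card_fiberwise_eq_card_filter _ _ _).symm
    _ = ∑ _y ∈ univ.filter p, Nat.card f.ker := sum_congr rfl fun y _ => by
      rw [← Fintype.card_subtype, ← Nat.card_eq_fintype_card]
      exact Nat.card_congr (f.fiberEquivKerOfSurjective hf y)
    _ = Nat.card f.ker * #{y | p y} := by rw [sum_const, smul_eq_mul, mul_comm]

lemma AddMonoidHom.two_mul_card_filter_eq_one {G : Type*} [AddGroup G] [Fintype G]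
    {φ : G →+ ZMod 2} (hφ : Surjective φ) : 2 * #{g | φ g = 1} = Fintype.card G := by
  have hone := φ.card_filter_of_surjective hφ (· = 1)
  have hall := φ.card_filter_of_surjective hφ fun _ => True
  rw [filter_eq', if_pos (mem_univ _), card_singleton] at hone
  rw [filter_true, filter_true, card_univ, card_univ, ZMod.card] at hall
  rw [hone, hall, mul_one, mul_comm]

lemma ZMod.card_filter_comp_castHom {m d : ℕ} [NeZero m] [NeZero d] (hd : d ∣ m)
    (p : ZMod d → Prop) [DecidablePred p] :
    d * #{i : ZMod m | p (ZMod.castHom hd (ZMod d) i)} = m * #{j | p j} := by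
  set f := (ZMod.castHom hd (ZMod d)).toAddMonoidHom
  have hf : Surjective f := ZMod.castHom_surjective hd
  have hp : #{i : ZMod m | p (ZMod.castHom hd (ZMod d) i)} = Nat.card f.ker * #{j | p j} :=
    f.card_filter_of_surjective hf p
  have hall := f.card_filter_of_surjective hf fun _ => True
  rw [filter_true, filter_true, card_univ, card_univ, ZMod.card, ZMod.card] at hall
  calc d * #{i : ZMod m | p (ZMod.castHom hd (ZMod d) i)} = Nat.card f.ker * d * #{j | p j} := by
        rw [hp, mul_left_comm, mul_assoc]
    _ = m * #{j | p j} := by rw [← hall]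

lemma vertexWeight_addMonoidHom_comp {V Γ Δ : Type*} [Fintype V] [AddCommMonoid Γ]
    [AddCommMonoid Δ] (G : SimpleGraph V) (φ : Γ →+ Δ) (ℓ : V → Γ) (x : V) :
    vertexWeight G (φ ∘ ℓ) x = φ (vertexWeight G ℓ x) := by
  simp [vertexWeight, map_sum]

section GeneralizedPetersen

variable {n k : ℕ} [NeZero n]

open Classical in
lemma GP_neighbors_inl (h1 : (1 : ZMod n) ≠ 0) (i : ZMod n) :
    ({v | (GP n k).Adj (.inl i) v} : Finset _) = {.inl (i + 1), .inl (i - 1), .inr i} := by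
  ext (j | j) <;>
    simp only [GP, SimpleGraph.fromRel_adj, mem_filter, mem_univ, true_and, mem_insert,
      mem_singleton, Sum.inl.injEq, Sum.inr.injEq, reduceCtorEq, or_false, false_or] <;>
    grind

open Classical in
lemma GP_neighbors_inr (hk : (k : ZMod n) ≠ 0) (i : ZMod n) :
    ({v | (GP n k).Adj (.inr i) v} : Finset _) = {.inr (i + k), .inr (i - k), .inl i} := by
  ext (j | j) <;>
    simp only [GP, SimpleGraph.fromRel_adj, mem_filter, mem_univ, true_and, mem_insert,
      mem_singleton, Sum.inl.injEq, Sum.inr.injEq, reduceCtorEq, or_false, false_or] <;>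
    grind

variable {Γ : Type*} [AddCommMonoid Γ]

lemma vertexWeight_GP_inl (h2 : (2 : ZMod n) ≠ 0) (ℓ : ZMod n ⊕ ZMod n → Γ) (i : ZMod n) :
    vertexWeight (GP n k) ℓ (.inl i) = ℓ (.inl (i + 1)) + ℓ (.inl (i - 1)) + ℓ (.inr i) := by
  have h1 : (1 : ZMod n) ≠ 0 := fun h => h2 (by rw [← one_add_one_eq_two, h, add_zero])
  rw [vertexWeight, GP_neighbors_inl h1, sum_insert, sum_pair, add_assoc]
  · simp
  · simp only [mem_insert, mem_singleton, Sum.inl.injEq, reduceCtorEq, or_false]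
    intro h
    exact h2 (by linear_combination h)

lemma vertexWeight_GP_inr (h2k : (2 * k : ZMod n) ≠ 0) (ℓ : ZMod n ⊕ ZMod n → Γ) (i : ZMod n) :
    vertexWeight (GP n k) ℓ (.inr i) = ℓ (.inr (i + k)) + ℓ (.inr (i - k)) + ℓ (.inl i) := by
  have hk : (k : ZMod n) ≠ 0 := fun h => h2k (by rw [h, mul_zero])
  rw [vertexWeight, GP_neighbors_inr hk, sum_insert, sum_pair, add_assoc]
  · simp
  · simp only [mem_insert, mem_singleton, Sum.inr.injEq, reduceCtorEq, or_false]
    intro h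
    exact h2k (by linear_combination h)

lemma vertexWeight_GP_four_two_inr (ℓ : ZMod 4 ⊕ ZMod 4 → Γ) (i : ZMod 4) :
    vertexWeight (GP 4 2) ℓ (.inr i) = ℓ (.inr (i + 2)) + ℓ (.inl i) := by
  have h : i - 2 = i + 2 := by linear_combination (-1 : ZMod 4) * (by decide : (4 : ZMod 4) = 0)
  rw [vertexWeight, GP_neighbors_inr (by decide), Nat.cast_ofNat, h, insert_eq_of_mem (by simp),
    sum_pair (by simp)]

end GeneralizedPetersen

lemma not_isDistMagic_GP_four_two {Γ : Type*} [AddCancelCommMonoid Γ]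
    (ℓ : ZMod 4 ⊕ ZMod 4 → Γ) (μ : Γ) : ¬ IsDistMagic (GP 4 2) ℓ μ := by
  rintro ⟨hℓ, hμ⟩
  have hx (i : ZMod 4) := vertexWeight_GP_inl (k := 2) (by decide) ℓ i ▸ hμ (.inl i)
  have hy (i : ZMod 4) := vertexWeight_GP_four_two_inr ℓ i ▸ hμ (.inr i)
  have h1 : ℓ (.inl 0) + ℓ (.inl 2) = ℓ (.inl 1) :=
    add_right_cancel (((hx 3).trans (hy 1).symm).trans (add_comm _ _))
  have h3 : ℓ (.inl 2) + ℓ (.inl 0) = ℓ (.inl 3) :=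
    add_right_cancel (((hx 1).trans (hy 3).symm).trans (add_comm _ _))
  exact absurd (hℓ.1 (h1.symm.trans ((add_comm _ _).trans h3))) (by decide)

section ParityLabeling

variable {m : ℕ} {a b : ZMod m → ZMod 2} {c : ZMod 2}

lemma recurrence_of_constant_weight (hx : ∀ i, a (i + 1) + a (i - 1) + b i = c)
    (hy : ∀ i, b (i + 2) + b (i - 2) + a i = c) (i : ZMod m) :
    a i + a (i + 2) + a (i + 3) + a (i + 4) + a (i + 6) = c := by
  linear_combination (norm := (ring_nf; reduce_mod_char)) hx (i + 1) + hx (i + 5) + hy (i + 3)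

lemma periodic_fifteen_of_constant_weight (hx : ∀ i, a (i + 1) + a (i - 1) + b i = c)
    (hy : ∀ i, b (i + 2) + b (i - 2) + a i = c) : Periodic a 15 ∧ Periodic b 15 := by
  have E := recurrence_of_constant_weight hx hy
  -- over `ZMod 2`, `(1 + X^2 + X^3 + X^4 + X^6) * (1 + X^2 + X^3 + X^6 + X^7 + X^9) = 1 + X^15`
  have ha : Periodic a 15 := fun i => by
    linear_combination (norm := (ring_nf; reduce_mod_char))
      E i + E (i + 2) + E (i + 3) + E (i + 6) + E (i + 7) + E (i + 9)
  refine ⟨ha, fun i => ?_⟩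
  linear_combination (norm := (ring_nf; reduce_mod_char))
    hx i + hx (i + 15) + ha (i - 1) + ha (i + 1)

lemma sum_add_sum_eq_zero_of_constant_weight [NeZero m]
    (hx : ∀ i, a (i + 1) + a (i - 1) + b i = c)
    (hy : ∀ i, b (i + 2) + b (i - 2) + a i = c) : ∑ i, a i + ∑ i, b i = 0 := by
  have shift (f : ZMod m → ZMod 2) (k : ZMod m) : ∑ i, f (i + k) = ∑ i, f i :=
    Equiv.sum_comp (Equiv.addRight k) f
  have hx' := congrArg (fun f => ∑ i, f i) (funext hx)
  have hy' := congrArg (fun f => ∑ i, f i) (funext hy)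
  simp only [sum_add_distrib, sub_eq_add_neg, shift] at hx' hy'
  linear_combination (norm := (ring_nf; reduce_mod_char)) hx' + hy'

lemma Function.Periodic.natCast_gcd {α : Type*} {f : ZMod m → α} {k : ℕ}
    (h : Periodic f (k : ZMod m)) : Periodic f (Nat.gcd k m : ZMod m) := by
  have hbezout : ((Nat.gcd k m : ℕ) : ZMod m) = (Nat.gcdA k m : ZMod m) * k := by
    have := congrArg (fun z : ℤ => (z : ZMod m)) (Nat.gcd_eq_gcd_ab k m)
    push_cast [ZMod.natCast_self] at this
    rw [this]
    ring
  rw [hbezout]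
  exact h.int_mul _

lemma Function.Periodic.exists_eq_comp_castHom [NeZero m] {α : Type*} {f : ZMod m → α} {d : ℕ}
    (hd : d ∣ m) (h : Periodic f (d : ZMod m)) :
    ∃ g : ZMod d → α, f = g ∘ ZMod.castHom hd (ZMod d) := by
  refine ⟨fun y => f (y.val : ZMod m), funext fun x => ?_⟩
  have hx : x = ((x.val % d : ℕ) : ZMod m) + (x.val / d : ℕ) * (d : ZMod m) := by
    rw [← Nat.cast_mul, ← Nat.cast_add, mul_comm, Nat.mod_add_div, ZMod.natCast_zmod_val]
  simp only [comp_apply, ZMod.castHom_apply, ZMod.cast_eq_val, ZMod.val_natCast]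
  conv_lhs => rw [hx]
  exact h.nat_mul _ _

lemma ZMod.natCast_card_filter_eq_one {ι : Type*} (s : Finset ι) (f : ι → ZMod 2) :
    (#{x ∈ s | f x = 1} : ZMod 2) = ∑ x ∈ s, f x := by
  rw [natCast_card_filter]
  refine sum_congr rfl fun x _ => ?_
  generalize f x = y
  fin_cases y <;> rfl

lemma card_filter_add_card_filter_ne_of_constant_weight [NeZero m]
    (hx : ∀ i, a (i + 1) + a (i - 1) + b i = c)
    (hy : ∀ i, b (i + 2) + b (i - 2) + a i = c) : #{i | a i = 1} + #{i | b i = 1} ≠ m := by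
  intro hcount
  set d := Nat.gcd 15 m
  have hd : d ∣ m := Nat.gcd_dvd_right 15 m
  have : NeZero d := ⟨(Nat.gcd_pos_of_pos_left m (by norm_num)).ne'⟩
  obtain ⟨ha, hb⟩ := periodic_fifteen_of_constant_weight hx hy
  obtain ⟨a', rfl⟩ := (ha.natCast_gcd (k := 15)).exists_eq_comp_castHom hd
  obtain ⟨b', rfl⟩ := (hb.natCast_gcd (k := 15)).exists_eq_comp_castHom hd
  have hsum : ∑ j, a' j + ∑ j, b' j = 0 := by
    refine sum_add_sum_eq_zero_of_constant_weight (c := c) (fun j => ?_) (fun j => ?_)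
    all_goals obtain ⟨i, rfl⟩ := ZMod.castHom_surjective hd j
    · simpa only [comp_apply, map_add, map_sub, map_one] using hx i
    · simpa only [comp_apply, map_add, map_sub, map_ofNat] using hy i
  have hcount' : #{j | a' j = 1} + #{j | b' j = 1} = d := by
    refine Nat.eq_of_mul_eq_mul_left (NeZero.pos m) ?_
    rw [mul_add, ← ZMod.card_filter_comp_castHom hd, ← ZMod.card_filter_comp_castHom hd, ← mul_add]
    exact (congrArg (d * ·) hcount).trans (mul_comm d m)
  have h2d : 2 ∣ d := by
    rw [← ZMod.natCast_eq_zero_iff, ← hcount', Nat.cast_add, ZMod.natCast_card_filter_eq_one,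
      ZMod.natCast_card_filter_eq_one, hsum]
  have := h2d.trans (Nat.gcd_dvd_left 15 m)
  omega

end ParityLabeling

lemma card_filter_ne_of_vertexWeight_GP_two_eq {n : ℕ} [NeZero n] (h4 : (4 : ZMod n) ≠ 0)
    {f : ZMod n ⊕ ZMod n → ZMod 2} {c : ZMod 2} (hf : ∀ v, vertexWeight (GP n 2) f v = c) :
    #{v | f v = 1} ≠ n := by
  have h2 : (2 : ZMod n) ≠ 0 := fun h => h4 (by linear_combination (2 : ZMod n) * h)
  have hsplit : #{v | f v = 1} = #{i | f (.inl i) = 1} + #{i | f (.inr i) = 1} := by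
    rw [card_filter, card_filter, card_filter, Fintype.sum_sum_type]
  rw [hsplit]
  refine card_filter_add_card_filter_ne_of_constant_weight (c := c) (fun i => ?_) (fun i => ?_)
  · simpa [vertexWeight_GP_inl h2] using hf (.inl i)
  · have h2k : (2 * (2 : ℕ) : ZMod n) ≠ 0 := by
      rw [Nat.cast_ofNat]
      exact fun h => h4 (by linear_combination h)
    simpa [vertexWeight_GP_inr h2k] using hf (.inr i)

theorem stmt16 {Γ : Type*} [AddCommGroup Γ] [Fintype Γ]
    (n : ℕ) [NeZero n] (hn : 3 ≤ n) (hcard : Fintype.card Γ = 2 * n) :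
    ¬ ∃ (ℓ : ZMod n ⊕ ZMod n → Γ) (μ : Γ), IsDistMagic (GP n 2) ℓ μ := by
  rintro ⟨ℓ, μ, hℓ, hμ⟩
  obtain rfl | hn4 := eq_or_ne n 4
  · exact not_isDistMagic_GP_four_two ℓ μ ⟨hℓ, hμ⟩
  have h4 : (4 : ZMod n) ≠ 0 := by
    rw [← Nat.cast_ofNat, Ne, ZMod.natCast_eq_zero_iff]
    intro h
    have := Nat.le_of_dvd (by norm_num) h
    interval_cases n <;> simp_all
  obtain ⟨φ, hφ⟩ := AddCommGroup.exists_addMonoidHom_zmod_surjective (Γ := Γ) Nat.prime_two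
    (by rw [Nat.card_eq_fintype_card, hcard]; exact dvd_mul_right 2 n)
  refine card_filter_ne_of_vertexWeight_GP_two_eq h4 (f := φ ∘ ℓ) (c := φ μ)
    (fun v => by rw [vertexWeight_addMonoidHom_comp, hμ]) ?_
  have hones := AddMonoidHom.two_mul_card_filter_eq_one hφ
  rw [hcard, ← card_bijective ℓ hℓ (s := {v | φ (ℓ v) = 1}) (by simp)] at hones
  simpa using hones
end
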